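/- The improper integral of the sinc function over the real line equals 1, i.e., ∫_{-∞}^{∞} sinc(x) dx = 1, where sinc(x) = sin(πx)/(πx) for x ≠ 0 and sinc(0) = 1. -/

import Mathlib

open Real Filter MeasureTheory

noncomputable def sinc (x : ℝ) : ℝ := if x = 0 then 1 else Real.sin (Real.pi * x) / (Real.pi * x)

/-!
For `t > 0`, `sin t / t = ∫ s in Ioi 0, exp (-t * s) * sin t`. Integrating over `t ∈ (0, R]` and
swapping the integrals (Fubini) gives `∫ t in 0..R, sin t / t = ∫ s in Ioi 0, (1 + s²)⁻¹ - r_R s`,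
where `r_R s = ∫ t in Ioi R, exp (-t * s) * sin t` is explicit and bounded by `2 * exp (-R * s)`.
So the integral is `π / 2 + O(1 / R)`. Evenness of sinc and the substitution `t = π x` then
give `∫ x in -R..R, sinc x = (2 / π) * ∫ t in 0..π * R, sin t / t → 1`.
-/

open Set Topology

lemma Function.Even.integral_neg_self_eq_two_smul {E : Type*} [NormedAddCommGroup E]
    [NormedSpace ℝ E] {f : ℝ → E} (hf : Function.Even f) {R : ℝ}
    (hint : IntervalIntegrable f volume 0 R) :
    ∫ x in -R..R, f x = (2 : ℝ) • ∫ x in 0..R, f x := by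
  have hint_neg : IntervalIntegrable f volume (-R) 0 := by
    simpa [hf _] using (hint.comp_sub_left 0).symm
  have hneg : ∫ x in -R..0, f x = ∫ x in 0..R, f x := by
    simpa [hf _] using (intervalIntegral.integral_comp_neg (a := 0) (b := R) f).symm
  rw [← intervalIntegral.integral_add_adjacent_intervals hint_neg hint, hneg, two_smul]

lemma integral_exp_neg_mul_Ioi_zero {t : ℝ} (ht : 0 < t) : ∫ s in Ioi 0, exp (-t * s) = t⁻¹ := by
  rw [integral_exp_mul_Ioi (neg_neg_of_pos ht), mul_zero, exp_zero, neg_div_neg_eq, one_div]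

/-- For `s > 0`, the closed form of `∫ t in Ioi R, exp (-t * s) * sin t`. -/
noncomputable def sinLaplaceTail (R s : ℝ) : ℝ :=
  exp (-R * s) * (cos R + s * sin R) / (1 + s ^ 2)

lemma integral_exp_neg_mul_mul_sin (R s : ℝ) :
    ∫ t in 0..R, exp (-t * s) * sin t = (1 + s ^ 2)⁻¹ - sinLaplaceTail R s := by
  have hs : 1 + s ^ 2 ≠ 0 := by positivity
  have primitive (t : ℝ) : HasDerivAt (fun t ↦ -sinLaplaceTail t s) (exp (-t * s) * sin t) t := by
    have hexp : HasDerivAt (fun t ↦ exp (-t * s)) (exp (-t * s) * -s) t := by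
      simpa using ((hasDerivAt_id t).neg.mul_const s).exp
    have htrig : HasDerivAt (fun t ↦ cos t + s * sin t) (-sin t + s * cos t) t :=
      (hasDerivAt_cos t).add ((hasDerivAt_sin t).const_mul s)
    exact ((hexp.mul htrig).div_const (1 + s ^ 2)).neg.congr_deriv (by field_simp; ring)
  rw [intervalIntegral.integral_eq_sub_of_hasDerivAt (fun t _ ↦ primitive t)
    (by apply Continuous.intervalIntegrable; fun_prop)]
  simp only [sinLaplaceTail, neg_mul, neg_zero, zero_mul, exp_zero, cos_zero, sin_zero, mul_zero,
    add_zero, mul_one, one_div, sub_neg_eq_add]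
  ring

lemma abs_sinLaplaceTail_le (R : ℝ) {s : ℝ} (hs : 0 ≤ s) :
    |sinLaplaceTail R s| ≤ 2 * exp (-R * s) := by
  have htrig : |cos R + s * sin R| ≤ 1 + s := by
    calc |cos R + s * sin R| ≤ |cos R| + s * |sin R| := by
          simpa [abs_mul, abs_of_nonneg hs] using abs_add_le (cos R) (s * sin R)
      _ ≤ 1 + s * 1 := by gcongr <;> simp [abs_cos_le_one, abs_sin_le_one]
      _ = 1 + s := by ring
  have hpos : 0 < 1 + s ^ 2 := by positivity
  rw [sinLaplaceTail, abs_div, abs_mul, abs_exp, abs_of_pos hpos, div_le_iff₀ hpos]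
  calc exp (-R * s) * |cos R + s * sin R| ≤ exp (-R * s) * (1 + s) := by gcongr
    _ ≤ exp (-R * s) * (2 * (1 + s ^ 2)) := by gcongr; nlinarith [sq_nonneg (s - 1)]
    _ = 2 * exp (-R * s) * (1 + s ^ 2) := by ring

lemma integrableOn_sinLaplaceTail {R : ℝ} (hR : 0 < R) :
    IntegrableOn (sinLaplaceTail R) (Ioi 0) := by
  refine ((exp_neg_integrableOn_Ioi 0 hR).const_mul 2).mono' ?_ ?_
  · have : Continuous (sinLaplaceTail R) :=
      (by fun_prop : Continuous _).div (by fun_prop) fun s ↦ by positivity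
    exact this.aestronglyMeasurable
  · filter_upwards [self_mem_ae_restrict measurableSet_Ioi] with s hs
    exact abs_sinLaplaceTail_le R (le_of_lt hs)

lemma abs_integral_sinLaplaceTail_le {R : ℝ} (hR : 0 < R) :
    |∫ s in Ioi 0, sinLaplaceTail R s| ≤ 2 * R⁻¹ := by
  rw [← Real.norm_eq_abs]
  calc ‖∫ s in Ioi 0, sinLaplaceTail R s‖ ≤ ∫ s in Ioi 0, 2 * exp (-R * s) := by
        refine norm_integral_le_of_norm_le ((exp_neg_integrableOn_Ioi 0 hR).const_mul 2) ?_
        filter_upwards [self_mem_ae_restrict measurableSet_Ioi] with s hs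
        exact abs_sinLaplaceTail_le R (le_of_lt hs)
    _ = 2 * R⁻¹ := by rw [integral_const_mul, integral_exp_neg_mul_Ioi_zero hR]

lemma tendsto_integral_sinLaplaceTail :
    Tendsto (fun R ↦ ∫ s in Ioi 0, sinLaplaceTail R s) atTop (𝓝 0) := by
  refine squeeze_zero_norm' ?_ (by simpa using tendsto_inv_atTop_zero.const_mul (2 : ℝ))
  filter_upwards [eventually_gt_atTop 0] with R hR
  exact abs_integral_sinLaplaceTail_le hR

lemma integrable_exp_neg_mul_mul_sin_prod (R : ℝ) :
    Integrable (Function.uncurry fun t s ↦ exp (-t * s) * sin t)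
      ((volume.restrict (Ioc 0 R)).prod (volume.restrict (Ioi 0))) := by
  have hmeas : AEStronglyMeasurable (Function.uncurry fun t s ↦ exp (-t * s) * sin t)
      ((volume.restrict (Ioc 0 R)).prod (volume.restrict (Ioi 0))) :=
    (by fun_prop : Continuous fun p : ℝ × ℝ ↦ exp (-p.1 * p.2) * sin p.1).aestronglyMeasurable
  refine (integrable_prod_iff hmeas).2 ⟨?_, ?_⟩
  · filter_upwards [self_mem_ae_restrict measurableSet_Ioc] with t ht
    exact (exp_neg_integrableOn_Ioi 0 ht.1).mul_const (sin t)
  · refine (integrable_const (1 : ℝ)).mono' hmeas.norm.integral_prod_right' ?_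
    filter_upwards [self_mem_ae_restrict measurableSet_Ioc] with t ht
    have hnorm : ∫ s in Ioi 0, ‖exp (-t * s) * sin t‖ = |sin t| / t := by
      simp only [norm_mul, Real.norm_eq_abs, abs_exp]
      rw [integral_mul_const, integral_exp_neg_mul_Ioi_zero ht.1, inv_mul_eq_div]
    rw [Function.uncurry_def, Real.norm_eq_abs, hnorm,
      abs_of_nonneg (div_nonneg (abs_nonneg _) ht.1.le), div_le_one ht.1]
    simpa [abs_of_pos ht.1] using abs_sin_le_abs (x := t)

lemma integral_sinc_eq_pi_div_two_sub {R : ℝ} (hR : 0 < R) :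
    ∫ t in 0..R, Real.sinc t = π / 2 - ∫ s in Ioi 0, sinLaplaceTail R s := by
  calc ∫ t in 0..R, Real.sinc t
      = ∫ t in Ioc 0 R, ∫ s in Ioi 0, exp (-t * s) * sin t := by
        rw [intervalIntegral.integral_of_le hR.le]
        refine setIntegral_congr_fun measurableSet_Ioc fun t ht ↦ ?_
        rw [Real.sinc_of_ne_zero ht.1.ne', integral_mul_const, integral_exp_neg_mul_Ioi_zero ht.1,
          div_eq_inv_mul]
    _ = ∫ s in Ioi 0, ∫ t in Ioc 0 R, exp (-t * s) * sin t :=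
        integral_integral_swap (integrable_exp_neg_mul_mul_sin_prod R)
    _ = ∫ s in Ioi 0, ((1 + s ^ 2)⁻¹ - sinLaplaceTail R s) := by
        refine setIntegral_congr_fun measurableSet_Ioi fun s _ ↦ ?_
        rw [← intervalIntegral.integral_of_le hR.le, integral_exp_neg_mul_mul_sin]
    _ = π / 2 - ∫ s in Ioi 0, sinLaplaceTail R s := by
        rw [integral_sub integrable_inv_one_add_sq.integrableOn (integrableOn_sinLaplaceTail hR),
          integral_Ioi_inv_one_add_sq, arctan_zero, sub_zero]

theorem tendsto_integral_sinc_atTop :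
    Tendsto (fun R ↦ ∫ t in 0..R, Real.sinc t) atTop (𝓝 (π / 2)) := by
  have h := tendsto_integral_sinLaplaceTail.const_sub (π / 2)
  rw [sub_zero] at h
  refine h.congr' ?_
  filter_upwards [eventually_gt_atTop 0] with R hR
  exact (integral_sinc_eq_pi_div_two_sub hR).symm

theorem sinc_integral_eq_one :
    Tendsto (fun R : ℝ => ∫ x in (-R)..R, _root_.sinc x) atTop (nhds 1) := by
  have hsinc : _root_.sinc = fun x ↦ Real.sinc (π * x) := by
    ext x
    simp [_root_.sinc, Real.sinc, pi_ne_zero]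
  have heven : Function.Even fun x ↦ Real.sinc (π * x) := fun x ↦ by
    simp only [mul_neg, Real.sinc_neg]
  have hscale : Tendsto (fun R ↦ π * R) atTop atTop := tendsto_id.const_mul_atTop pi_pos
  have hlim := (tendsto_integral_sinc_atTop.comp hscale).const_mul (2 * π⁻¹)
  rw [show 2 * π⁻¹ * (π / 2) = 1 by field_simp] at hlim
  refine hlim.congr fun R ↦ ?_
  rw [hsinc, heven.integral_neg_self_eq_two_smul (by apply Continuous.intervalIntegrable; fun_prop),
    intervalIntegral.integral_comp_mul_left _ pi_ne_zero, mul_zero, smul_eq_mul, smul_eq_mul,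
    Function.comp_apply]
  ring
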